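/- Under the bound ∫_s^t ∫_X p(s,x,u,z)·p(u,z,t,y)·q(u,z) dm(z) du ≤ (η + β(t-s))·p(s,x,t,y) for all s < t with 0 ≤ η < 1, β ≥ 0, the perturbation series p̃_q = ∑_{n=0}^∞ p_n satisfies, for all s < t and x,y ∈ X: p̃_q(s,x,t,y) ≤ (1/(1-η))·exp(β(t-s)/(1-η))·p(s,x,t,y). -/

import Mathlib

/-!
Put `C = 1 / (1 - η)` and `W r = C exp (β C r)` (`perturbationBound η β`). By induction on `N`,
the partial sums `∑_{n<N} p_n(s,x,t,y)` are at most `W (t - s) p(s,x,t,y)`: as `p_{n+1}`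
integrates `p_n` against `p q`, the inductive step reduces to
`p + ∫_s^t W (u - s) g u du ≤ W (t - s) p` with `g u = ∫ p(s,x,u,z) p(u,z,t,y) q(u,z) dm(z)`.
Chapman–Kolmogorov at an intermediate time `v` turns the hypothesis into the tail bound
`∫_v^t g ≤ (η + β (t - v)) p`. Writing `W (u - s) = C + ∫_s^u W'` and exchanging the order of
integration leaves the explicit integral `C (η + β (t - s)) + ∫_s^t W' (v - s) (η + β (t - v)) dv`,
which equals `W (t - s) - 1` since `(1 - η) C = 1`.
-/

open MeasureTheory Set
open scoped ENNReal

noncomputable def pseq {X : Type*} [MeasurableSpace X] (μ : Measure X)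
    (p : ℝ → X → ℝ → X → ℝ≥0∞) (q : ℝ → X → ℝ≥0∞) : ℕ → ℝ → X → ℝ → X → ℝ≥0∞
  | 0 => p
  | n + 1 => fun s x t y =>
      ∫⁻ u in Set.Ioo s t, ∫⁻ z, pseq μ p q n s x u z * p u z t y * q u z ∂μ

theorem sigmaFinite_of_lintegral_ne_top_of_ne_zero {α : Type*} [MeasurableSpace α]
    {μ : Measure α} {f : α → ℝ≥0∞} (hf : Measurable f) (hf0 : ∀ a, f a ≠ 0)
    (hfin : ∫⁻ a, f a ∂μ ≠ ∞) : SigmaFinite μ := by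
  have : IsFiniteMeasure (μ.withDensity f) := isFiniteMeasure_withDensity hfin
  have := SigmaFinite.withDensity_of_ne_top' (μ := μ.withDensity f)
    (fun a => ENNReal.inv_ne_top.2 (hf0 a))
  rwa [withDensity_inv_same hf (ae_of_all _ hf0) ((ae_lt_top hf hfin).mono fun _ h => h.ne)]
    at this

theorem sum_lintegral_le_lintegral_sum {α ι : Type*} [MeasurableSpace α] {μ : Measure α}
    (s : Finset ι) (f : ι → α → ℝ≥0∞) :
    ∑ i ∈ s, ∫⁻ a, f i a ∂μ ≤ ∫⁻ a, ∑ i ∈ s, f i a ∂μ := by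
  classical
  induction s using Finset.induction_on with
  | empty => simp
  | insert i s hi ih =>
    simp only [Finset.sum_insert hi]
    exact (add_le_add_right ih _).trans (le_lintegral_add _ _)

theorem setLIntegral_Ioo_setLIntegral_Ioo_swap {f g : ℝ → ℝ≥0∞} (hf : Measurable f)
    (hg : Measurable g) (s t : ℝ) :
    ∫⁻ u in Ioo s t, (∫⁻ v in Ioo s u, f v) * g u
      = ∫⁻ v in Ioo s t, f v * ∫⁻ u in Ioo v t, g u := by
  set F : ℝ × ℝ → ℝ≥0∞ := {w | w.2 < w.1}.indicator fun w => f w.2 * g w.1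
  have hF : Measurable F :=
    ((hf.comp measurable_snd).mul (hg.comp measurable_fst)).indicator
      (measurableSet_lt measurable_snd measurable_fst)
  calc ∫⁻ u in Ioo s t, (∫⁻ v in Ioo s u, f v) * g u
      = ∫⁻ u in Ioo s t, ∫⁻ v in Ioo s t, F (u, v) := by
        refine setLIntegral_congr_fun measurableSet_Ioo fun u hu => ?_
        have : ∀ v, F (u, v) = (Iio u).indicator (fun v => f v * g u) v := fun _ => rfl
        rw [lintegral_congr this, setLIntegral_indicator measurableSet_Iio, Iio_inter_Ioo,
          min_eq_left hu.2.le, lintegral_mul_const _ hf]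
    _ = ∫⁻ v in Ioo s t, ∫⁻ u in Ioo s t, F (u, v) := lintegral_lintegral_swap hF.aemeasurable
    _ = ∫⁻ v in Ioo s t, f v * ∫⁻ u in Ioo v t, g u := by
        refine setLIntegral_congr_fun measurableSet_Ioo fun v hv => ?_
        have : ∀ u, F (u, v) = (Ioi v).indicator (fun u => f v * g u) u := fun _ => rfl
        rw [lintegral_congr this, setLIntegral_indicator measurableSet_Ioi, Ioi_inter_Ioo,
          max_eq_left hv.1.le, lintegral_const_mul _ hg]

theorem setLIntegral_Ioo_mul_le_of_tail_le {g w h : ℝ → ℝ≥0∞} (hg : Measurable g)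
    (hw : Measurable w) {s t : ℝ} (c : ℝ≥0∞) (hs : ∫⁻ u in Ioo s t, g u ≤ h s)
    (htail : ∀ v ∈ Ioo s t, ∫⁻ u in Ioo v t, g u ≤ h v) :
    ∫⁻ u in Ioo s t, (c + ∫⁻ v in Ioo s u, w v) * g u
      ≤ c * h s + ∫⁻ v in Ioo s t, w v * h v := by
  simp_rw [add_mul]
  rw [lintegral_add_left (hg.const_mul c), lintegral_const_mul c hg,
    setLIntegral_Ioo_setLIntegral_Ioo_swap hw hg]
  exact add_le_add (mul_le_mul_right hs c)
    (setLIntegral_mono' measurableSet_Ioo fun v hv => mul_le_mul_right (htail v hv) _)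

theorem ofReal_add_setLIntegral_Ioo_deriv {G G' : ℝ → ℝ} {a b : ℝ} (hab : a ≤ b)
    (hG : ∀ x, HasDerivAt G (G' x) x) (hG' : Continuous G') (hGa : 0 ≤ G a)
    (hG'0 : ∀ x ∈ Ioo a b, 0 ≤ G' x) :
    ENNReal.ofReal (G a) + ∫⁻ x in Ioo a b, ENNReal.ofReal (G' x) = ENNReal.ofReal (G b) := by
  rw [← ofReal_integral_eq_lintegral_ofReal
      (hG'.integrableOn_Icc.mono_set Ioo_subset_Icc_self)
      (ae_restrict_of_forall_mem measurableSet_Ioo hG'0),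
    ← ENNReal.ofReal_add hGa (setIntegral_nonneg measurableSet_Ioo hG'0),
    ← integral_Ioc_eq_integral_Ioo, ← intervalIntegral.integral_of_le hab,
    intervalIntegral.integral_eq_sub_of_hasDerivAt (fun x _ => hG x) (hG'.intervalIntegrable a b),
    add_sub_cancel]

noncomputable def perturbationBound (η β r : ℝ) : ℝ := 1 / (1 - η) * Real.exp (β * r / (1 - η))

theorem perturbationBound_nonneg {η : ℝ} (hη : η < 1) (β r : ℝ) : 0 ≤ perturbationBound η β r :=
  mul_nonneg (one_div_nonneg.2 (sub_nonneg.2 hη.le)) (Real.exp_pos _).le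

theorem hasDerivAt_perturbationBound (η β r : ℝ) :
    HasDerivAt (perturbationBound η β) (β / (1 - η) * perturbationBound η β r) r := by
  refine (((hasDerivAt_id r).const_mul β |>.div_const (1 - η)).exp.const_mul (1 / (1 - η))
    ).congr_deriv ?_
  rw [perturbationBound, id]
  ring

theorem add_setLIntegral_perturbationBound_mul_le {g : ℝ → ℝ≥0∞} (hg : Measurable g)
    {η β s t : ℝ} {P : ℝ≥0∞} (hη0 : 0 ≤ η) (hη1 : η < 1) (hβ : 0 ≤ β) (hst : s ≤ t)
    (hs : ∫⁻ u in Ioo s t, g u ≤ ENNReal.ofReal (η + β * (t - s)) * P)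
    (htail : ∀ v ∈ Ioo s t, ∫⁻ u in Ioo v t, g u ≤ ENNReal.ofReal (η + β * (t - v)) * P) :
    P + ∫⁻ u in Ioo s t, ENNReal.ofReal (perturbationBound η β (u - s)) * g u
      ≤ ENNReal.ofReal (perturbationBound η β (t - s)) * P := by
  set W : ℝ → ℝ := fun u => perturbationBound η β (u - s)
  set κ := β / (1 - η)
  have h1η : 0 < 1 - η := by linarith
  have hκ : 0 ≤ κ := div_nonneg hβ h1η.le
  have hW : ∀ u, HasDerivAt W (κ * W u) u := fun u =>
    (hasDerivAt_perturbationBound η β (u - s)).comp_sub_const u s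
  have hWc : Continuous W := continuous_iff_continuousAt.2 fun u => (hW u).continuousAt
  have hW0 : ∀ u, 0 ≤ W u := fun u => perturbationBound_nonneg hη1 β _
  have hh : ∀ v ≤ t, 0 ≤ η + β * (t - v) := fun v hv => by nlinarith
  have hWs : W s = 1 / (1 - η) := by simp [W, perturbationBound]
  set G : ℝ → ℝ := fun v => W v * (1 + β * (t - v))
  have hG : ∀ v, HasDerivAt G (κ * W v * (η + β * (t - v))) v := fun v => by
    refine ((hW v).mul (((hasDerivAt_id v).const_sub t).const_mul β |>.const_add 1)
      ).congr_deriv ?_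
    simp only [κ, id]
    field_simp
    ring
  have hGs : G s = 1 + W s * (η + β * (t - s)) := by
    simp only [G]; rw [hWs]; field_simp; ring
  have hG0 : 0 ≤ G s := hGs ▸ add_nonneg zero_le_one (mul_nonneg (hW0 s) (hh s hst))
  have hdecomp : ∀ u ∈ Ioo s t, ENNReal.ofReal (W u)
      = ENNReal.ofReal (W s) + ∫⁻ v in Ioo s u, ENNReal.ofReal (κ * W v) :=
    fun u hu => (ofReal_add_setLIntegral_Ioo_deriv hu.1.le hW (continuous_const.mul hWc)
      (hW0 s) fun v _ => mul_nonneg hκ (hW0 v)).symm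
  calc P + ∫⁻ u in Ioo s t, ENNReal.ofReal (W u) * g u
      = P + ∫⁻ u in Ioo s t,
          (ENNReal.ofReal (W s) + ∫⁻ v in Ioo s u, ENNReal.ofReal (κ * W v)) * g u := by
        rw [setLIntegral_congr_fun measurableSet_Ioo fun u hu => by rw [hdecomp u hu]]
    _ ≤ P + (ENNReal.ofReal (W s) * (ENNReal.ofReal (η + β * (t - s)) * P)
          + ∫⁻ v in Ioo s t, ENNReal.ofReal (κ * W v) * (ENNReal.ofReal (η + β * (t - v)) * P)) :=
        add_le_add le_rfl (setLIntegral_Ioo_mul_le_of_tail_le hg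
          (continuous_const.mul hWc).measurable.ennreal_ofReal _ hs htail)
    _ = (ENNReal.ofReal (G s)
          + ∫⁻ v in Ioo s t, ENNReal.ofReal (κ * W v * (η + β * (t - v)))) * P := by
        have hpull : ∫⁻ v in Ioo s t,
            ENNReal.ofReal (κ * W v) * (ENNReal.ofReal (η + β * (t - v)) * P)
            = (∫⁻ v in Ioo s t, ENNReal.ofReal (κ * W v * (η + β * (t - v)))) * P := by
          rw [← lintegral_mul_const _ (by fun_prop)]
          refine lintegral_congr fun v => ?_
          rw [← mul_assoc, ← ENNReal.ofReal_mul (mul_nonneg hκ (hW0 v))]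
        rw [hpull, hGs, ENNReal.ofReal_add zero_le_one (mul_nonneg (hW0 s) (hh s hst)),
          ENNReal.ofReal_one, ENNReal.ofReal_mul (hW0 s)]
        ring
    _ = ENNReal.ofReal (W t) * P := by
        rw [ofReal_add_setLIntegral_Ioo_deriv hst hG (by fun_prop) hG0
          fun v hv => mul_nonneg (mul_nonneg hκ (hW0 v)) (hh v hv.2.le)]
        simp [G]

section
variable {X : Type*} [MeasurableSpace X] {μ : Measure X} [SFinite μ]
  {p : ℝ → X → ℝ → X → ℝ≥0∞} {q : ℝ → X → ℝ≥0∞}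

theorem setLIntegral_Ioo_tail_le
    (hmp : Measurable fun a : ℝ × X × ℝ × X => p a.1 a.2.1 a.2.2.1 a.2.2.2)
    (hmq : Measurable fun a : ℝ × X => q a.1 a.2)
    (hCK : ∀ s u t : ℝ, ∀ x y : X, s < u → u < t →
      ∫⁻ z, p s x u z * p u z t y ∂μ = p s x t y)
    {η β : ℝ} (hbound : ∀ s t : ℝ, ∀ x y : X, s < t →
      (∫⁻ u in Ioo s t, ∫⁻ z, p s x u z * p u z t y * q u z ∂μ)
        ≤ ENNReal.ofReal (η + β * (t - s)) * p s x t y)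
    {s v t : ℝ} (x y : X) (hsv : s < v) (hvt : v < t) :
    ∫⁻ u in Ioo v t, ∫⁻ z, p s x u z * p u z t y * q u z ∂μ
      ≤ ENNReal.ofReal (η + β * (t - v)) * p s x t y := by
  calc ∫⁻ u in Ioo v t, ∫⁻ z, p s x u z * p u z t y * q u z ∂μ
      = ∫⁻ u in Ioo v t, ∫⁻ z, ∫⁻ w, p s x v w * (p v w u z * p u z t y * q u z) ∂μ ∂μ := by
        refine setLIntegral_congr_fun measurableSet_Ioo fun u hu => lintegral_congr fun z => ?_
        rw [← hCK s v u x z hsv hu.1, ← lintegral_mul_const _ (by fun_prop),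
          ← lintegral_mul_const _ (by fun_prop)]
        simp only [mul_assoc]
    _ = ∫⁻ u in Ioo v t, ∫⁻ w, ∫⁻ z, p s x v w * (p v w u z * p u z t y * q u z) ∂μ ∂μ := by
        refine lintegral_congr fun u => lintegral_lintegral_swap ?_
        fun_prop
    _ = ∫⁻ w, (∫⁻ u in Ioo v t, ∫⁻ z, p s x v w * (p v w u z * p u z t y * q u z) ∂μ) ∂μ := by
        refine lintegral_lintegral_swap (Measurable.aemeasurable ?_)
        exact Measurable.lintegral_prod_right' (f := fun a : (ℝ × X) × X =>
          p s x v a.1.2 * (p v a.1.2 a.1.1 a.2 * p a.1.1 a.2 t y * q a.1.1 a.2)) (by fun_prop)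
    _ = ∫⁻ w, p s x v w * (∫⁻ u in Ioo v t, ∫⁻ z, p v w u z * p u z t y * q u z ∂μ) ∂μ := by
        refine lintegral_congr fun w => ?_
        rw [← lintegral_const_mul _ ?_]
        · refine lintegral_congr fun u => lintegral_const_mul _ ?_
          fun_prop
        · exact Measurable.lintegral_prod_right' (f := fun a : ℝ × X =>
            p v w a.1 a.2 * p a.1 a.2 t y * q a.1 a.2) (by fun_prop)
    _ ≤ ∫⁻ w, p s x v w * (ENNReal.ofReal (η + β * (t - v)) * p v w t y) ∂μ := by
        gcongr with w; exact hbound v t w y hvt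
    _ = ENNReal.ofReal (η + β * (t - v)) * p s x t y := by
        rw [← hCK s v t x y hsv hvt, ← lintegral_const_mul _ (by fun_prop)]
        simp only [mul_left_comm]

theorem sum_range_pseq_le
    (hmp : Measurable fun a : ℝ × X × ℝ × X => p a.1 a.2.1 a.2.2.1 a.2.2.2)
    (hmq : Measurable fun a : ℝ × X => q a.1 a.2)
    (hCK : ∀ s u t : ℝ, ∀ x y : X, s < u → u < t →
      ∫⁻ z, p s x u z * p u z t y ∂μ = p s x t y)
    {η β : ℝ} (hη0 : 0 ≤ η) (hη1 : η < 1) (hβ : 0 ≤ β)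
    (hbound : ∀ s t : ℝ, ∀ x y : X, s < t →
      (∫⁻ u in Ioo s t, ∫⁻ z, p s x u z * p u z t y * q u z ∂μ)
        ≤ ENNReal.ofReal (η + β * (t - s)) * p s x t y)
    (n : ℕ) {s t : ℝ} (x y : X) (hst : s < t) :
    ∑ k ∈ Finset.range n, pseq μ p q k s x t y
      ≤ ENNReal.ofReal (perturbationBound η β (t - s)) * p s x t y := by
  induction n generalizing t y with
  | zero => simp
  | succ n ih =>
    have hsum : ∑ k ∈ Finset.range n, pseq μ p q (k + 1) s x t y
        ≤ ∫⁻ u in Ioo s t, ∫⁻ z,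
            (∑ k ∈ Finset.range n, pseq μ p q k s x u z) * p u z t y * q u z ∂μ := by
      simp only [pseq, Finset.sum_mul]
      refine (sum_lintegral_le_lintegral_sum _ _).trans (lintegral_mono fun u => ?_)
      exact sum_lintegral_le_lintegral_sum _ _
    have hIH : ∫⁻ u in Ioo s t, ∫⁻ z,
          (∑ k ∈ Finset.range n, pseq μ p q k s x u z) * p u z t y * q u z ∂μ
        ≤ ∫⁻ u in Ioo s t, ENNReal.ofReal (perturbationBound η β (u - s))
            * ∫⁻ z, p s x u z * p u z t y * q u z ∂μ := by
      refine setLIntegral_mono' measurableSet_Ioo fun u hu => ?_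
      rw [← lintegral_const_mul' _ _ ENNReal.ofReal_ne_top]
      refine lintegral_mono fun z => ?_
      rw [← mul_assoc, ← mul_assoc]
      gcongr
      exact ih z hu.1
    calc ∑ k ∈ Finset.range (n + 1), pseq μ p q k s x t y
        = p s x t y + ∑ k ∈ Finset.range n, pseq μ p q (k + 1) s x t y := by
          rw [Finset.sum_range_succ', add_comm]; rfl
      _ ≤ p s x t y + ∫⁻ u in Ioo s t, ENNReal.ofReal (perturbationBound η β (u - s))
            * ∫⁻ z, p s x u z * p u z t y * q u z ∂μ := by
          gcongr; exact hsum.trans hIH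
      _ ≤ ENNReal.ofReal (perturbationBound η β (t - s)) * p s x t y :=
          add_setLIntegral_perturbationBound_mul_le
            (Measurable.lintegral_prod_right' (f := fun a : ℝ × X =>
              p s x a.1 a.2 * p a.1 a.2 t y * q a.1 a.2) (by fun_prop))
            hη0 hη1 hβ hst.le (hbound s t x y hst)
            fun v hv => setLIntegral_Ioo_tail_le hmp hmq hCK hbound x y hv.1 hv.2

end

theorem perturbation_series_upper_bound_general {X : Type*} [MeasurableSpace X] (μ : Measure X)
    (p : ℝ → X → ℝ → X → ℝ≥0∞) (q : ℝ → X → ℝ≥0∞)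
    (hmp : Measurable fun a : ℝ × X × ℝ × X => p a.1 a.2.1 a.2.2.1 a.2.2.2)
    (hmq : Measurable fun a : ℝ × X => q a.1 a.2)
    (hpos : ∀ s t : ℝ, ∀ x y : X, s < t → 0 < p s x t y ∧ p s x t y < ⊤)
    (hCK : ∀ s u t : ℝ, ∀ x y : X, s < u → u < t →
      ∫⁻ z, p s x u z * p u z t y ∂μ = p s x t y)
    (η β : ℝ) (hη0 : 0 ≤ η) (hη1 : η < 1) (hβ : 0 ≤ β)
    (hbound : ∀ s t : ℝ, ∀ x y : X, s < t →
      (∫⁻ u in Set.Ioo s t, ∫⁻ z, p s x u z * p u z t y * q u z ∂μ)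
        ≤ ENNReal.ofReal (η + β * (t - s)) * p s x t y)
    (s t : ℝ) (x y : X) (hst : s < t) :
    ∑' n : ℕ, pseq μ p q n s x t y
      ≤ ENNReal.ofReal ((1 / (1 - η)) * Real.exp (β * (t - s) / (1 - η))) * p s x t y := by
  -- Tonelli needs `μ` σ-finite: `z ↦ p(s,x,m,z) p(m,z,t,y)` is positive with integral `p(s,x,t,y)`
  obtain ⟨hsm, hmt⟩ : s < (s + t) / 2 ∧ (s + t) / 2 < t := ⟨by linarith, by linarith⟩
  have : SigmaFinite μ := sigmaFinite_of_lintegral_ne_top_of_ne_zero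
    (f := fun z => p s x ((s + t) / 2) z * p ((s + t) / 2) z t y) (by fun_prop)
    (fun z => mul_ne_zero (hpos _ _ _ _ hsm).1.ne' (hpos _ _ _ _ hmt).1.ne')
    (by rw [hCK _ _ _ _ _ hsm hmt]; exact (hpos s t x y hst).2.ne)
  rw [ENNReal.tsum_eq_iSup_nat]
  exact iSup_le fun n => sum_range_pseq_le hmp hmq hCK hη0 hη1 hβ hbound n x y hst

/-- Theorem 3.6 (main estimate): under the bound ∫∫ p p q ≤ (η + β(t-s)) p with
0 ≤ η < 1, β ≥ 0, the perturbation series satisfies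
p̃_q(s,x,t,y) ≤ (1/(1-η)) exp(β(t-s)/(1-η)) p(s,x,t,y). -/
theorem perturbation_series_upper_bound {X : Type*} [MeasurableSpace X] (μ : Measure X)
    (p : ℝ → X → ℝ → X → ℝ≥0∞) (q : ℝ → X → ℝ≥0∞)
    (hmp : Measurable fun a : ℝ × X × ℝ × X => p a.1 a.2.1 a.2.2.1 a.2.2.2)
    (hmq : Measurable fun a : ℝ × X => q a.1 a.2)
    (hzero : ∀ s t : ℝ, ∀ x y : X, t ≤ s → p s x t y = 0)
    (hpos : ∀ s t : ℝ, ∀ x y : X, s < t → 0 < p s x t y ∧ p s x t y < ⊤)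
    (hCK : ∀ s u t : ℝ, ∀ x y : X, s < u → u < t →
      ∫⁻ z, p s x u z * p u z t y ∂μ = p s x t y)
    (η β : ℝ) (hη0 : 0 ≤ η) (hη1 : η < 1) (hβ : 0 ≤ β)
    (hbound : ∀ s t : ℝ, ∀ x y : X, s < t →
      (∫⁻ u in Set.Ioo s t, ∫⁻ z, p s x u z * p u z t y * q u z ∂μ)
        ≤ ENNReal.ofReal (η + β * (t - s)) * p s x t y)
    (s t : ℝ) (x y : X) (hst : s < t) :
    ∑' n : ℕ, pseq μ p q n s x t y
      ≤ ENNReal.ofReal ((1 / (1 - η)) * Real.exp (β * (t - s) / (1 - η))) * p s x t y :=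
  perturbation_series_upper_bound_general μ p q hmp hmq hpos hCK η β hη0 hη1 hβ hbound s t x y hst
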